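/- Assume the agents are ordered: w_A(e) ≤ w_B(e) for every edge e ∈ E. Then for every vertex x, min{ d_A(s_A, s_B), d_B(s_A, s_B) } ≤ d_A(s_A, x) + d_B(s_B, x) ≤ 2 · T_RV(x). Consequently, min{ d_A(s_A, s_B), d_B(s_A, s_B) } ≤ 2 · min over all u ∈ V of T_RV(u). -/
import Mathlib


open SimpleGraph

/-- The weighted shortest-path distance from `u` to `v` in `G` with edge weights `w`:
the infimum, over all walks from `u` to `v`, of the sum of the weights of traversed edges. -/
noncomputable def wdist {V : Type*} (G : SimpleGraph V) (w : Sym2 V → ℝ) (u v : V) : ℝ :=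
  sInf (Set.range fun p : G.Walk u v => (p.edges.map w).sum)

section aux

variable {V : Type*} {G : SimpleGraph V} {w w' : Sym2 V → ℝ} {u v x : V}

lemma wdist_range_nonempty (h : G.Reachable u v) :
    (Set.range fun p : G.Walk u v => (p.edges.map w).sum).Nonempty :=
  ⟨_, ⟨h.some, rfl⟩⟩

lemma wdist_bddBelow (hw : ∀ e ∈ G.edgeSet, 0 ≤ w e) :
    BddBelow (Set.range fun p : G.Walk u v => (p.edges.map w).sum) := by
  refine ⟨0, ?_⟩
  rintro _ ⟨p, rfl⟩
  apply List.sum_nonneg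
  intro a ha
  obtain ⟨e, he, rfl⟩ := List.mem_map.1 ha
  exact hw e (p.edges_subset_edgeSet he)

lemma wdist_le_walk (hw : ∀ e ∈ G.edgeSet, 0 ≤ w e) (p : G.Walk u v) :
    wdist G w u v ≤ (p.edges.map w).sum :=
  csInf_le (wdist_bddBelow hw) ⟨p, rfl⟩

lemma wdist_mono (h : G.Reachable u v) (hw : ∀ e ∈ G.edgeSet, 0 ≤ w e)
    (hle : ∀ e ∈ G.edgeSet, w e ≤ w' e) :
    wdist G w u v ≤ wdist G w' u v := by
  refine le_csInf (wdist_range_nonempty h) ?_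
  rintro _ ⟨p, rfl⟩
  refine (wdist_le_walk hw p).trans (List.sum_le_sum ?_)
  intro e he
  exact hle e (p.edges_subset_edgeSet he)

lemma wdist_symm : wdist G w u v = wdist G w v u := by
  unfold wdist
  congr 1
  ext r
  constructor
  · rintro ⟨p, rfl⟩
    exact ⟨p.reverse, by simp [List.sum_reverse]⟩
  · rintro ⟨p, rfl⟩
    exact ⟨p.reverse, by simp [List.sum_reverse]⟩

lemma wdist_triangle (hw : ∀ e ∈ G.edgeSet, 0 ≤ w e)
    (h1 : G.Reachable u v) (h2 : G.Reachable v x) :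
    wdist G w u x ≤ wdist G w u v + wdist G w v x := by
  have key : ∀ (p : G.Walk u v) (q : G.Walk v x),
      wdist G w u x ≤ (p.edges.map w).sum + (q.edges.map w).sum := by
    intro p q
    have := wdist_le_walk hw (p.append q)
    simpa [SimpleGraph.Walk.edges_append] using this
  have step : ∀ p : G.Walk u v, wdist G w u x - (p.edges.map w).sum ≤ wdist G w v x := by
    intro p
    refine le_csInf (wdist_range_nonempty h2) ?_
    rintro _ ⟨q, rfl⟩
    linarith [key p q]
  have : wdist G w u x - wdist G w v x ≤ wdist G w u v := by
    refine le_csInf (wdist_range_nonempty h1) ?_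
    rintro _ ⟨p, rfl⟩
    linarith [step p]
  linarith

end aux

/-- Ordered agents case (`w_A(e) ≤ w_B(e)` on every edge). For every vertex `x`,
`min{d_A(s_A,s_B), d_B(s_A,s_B)} ≤ d_A(s_A,x) + d_B(s_B,x) ≤ 2·T_RV(x)`, where
`T_RV(x) = max{d_A(s_A,x), d_B(s_B,x)}`; consequently
`min{d_A(s_A,s_B), d_B(s_A,s_B)} ≤ 2 · min_{u ∈ V} T_RV(u)`. -/
theorem stmt_8 {V : Type*} [Fintype V] (G : SimpleGraph V) (hconn : G.Connected)
    (wA wB : Sym2 V → ℝ)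
    (hposA : ∀ e ∈ G.edgeSet, 0 < wA e) (hposB : ∀ e ∈ G.edgeSet, 0 < wB e)
    (sA sB : V) (hne : sA ≠ sB)
    (hord : ∀ e ∈ G.edgeSet, wA e ≤ wB e) :
    (∀ x : V,
      min (wdist G wA sA sB) (wdist G wB sA sB) ≤ wdist G wA sA x + wdist G wB sB x ∧
      wdist G wA sA x + wdist G wB sB x ≤ 2 * max (wdist G wA sA x) (wdist G wB sB x)) ∧
    (∀ u : V,
      min (wdist G wA sA sB) (wdist G wB sA sB)
        ≤ 2 * max (wdist G wA sA u) (wdist G wB sB u)) := by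
  have hA0 : ∀ e ∈ G.edgeSet, 0 ≤ wA e := fun e he => (hposA e he).le
  have hB0 : ∀ e ∈ G.edgeSet, 0 ≤ wB e := fun e he => (hposB e he).le
  have hreach : ∀ a b : V, G.Reachable a b := fun a b => hconn a b
  have hmain : ∀ x : V,
      min (wdist G wA sA sB) (wdist G wB sA sB) ≤ wdist G wA sA x + wdist G wB sB x ∧
      wdist G wA sA x + wdist G wB sB x ≤ 2 * max (wdist G wA sA x) (wdist G wB sB x) := by
    intro x
    constructor
    · have h1 : wdist G wA sA sB ≤ wdist G wA sA x + wdist G wA x sB :=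
        wdist_triangle hA0 (hreach sA x) (hreach x sB)
      have h2 : wdist G wA x sB ≤ wdist G wB x sB :=
        wdist_mono (hreach x sB) hA0 hord
      have h3 : wdist G wB x sB = wdist G wB sB x := wdist_symm
      calc min (wdist G wA sA sB) (wdist G wB sA sB) ≤ wdist G wA sA sB := min_le_left _ _
        _ ≤ wdist G wA sA x + wdist G wB sB x := by rw [← h3]; linarith
    · have := le_max_left (wdist G wA sA x) (wdist G wB sB x)
      have := le_max_right (wdist G wA sA x) (wdist G wB sB x)
      linarith
  refine ⟨hmain, fun u => (hmain u).1.trans (hmain u).2⟩
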